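/- arXiv:1311.7307 — 4 statements merged into one kernel-verified Lean document; each statement's English description precedes it below -/
import Mathlib

section
/- Every DIME can be rewritten into an equivalent reduced DIME: for every DIME E over a finite alphabet Σ there exists a reduced DIME E' over Σ such that L(E') = L(E). -/
set_option autoImplicit false

universe u v w

/-- An unordered word over an alphabet `σ`: a multiset over `σ`,
viewed as a function giving the number of occurrences of each symbol. -/
def UWord (σ : Type u) : Type u := σ → ℕ

/-- The empty unordered word `ε`. -/
def UWord.zero {σ : Type u} : UWord σ := fun _ => 0

/-- Unordered concatenation (multiset union) of two unordered words. -/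
def UWord.add {σ : Type u} (w₁ w₂ : UWord σ) : UWord σ := fun a => w₁ a + w₂ a

/-- The unordered word consisting of a single occurrence of `a`. -/
def UWord.single {σ : Type u} [DecidableEq σ] (a : σ) : UWord σ :=
  fun b => if b = a then 1 else 0

/-- Unordered concatenation of a list of unordered words. -/
def listSum {σ : Type u} (l : List (UWord σ)) : UWord σ := l.foldr UWord.add UWord.zero

/-- An interval multiplicity `[lo,hi]` (with `hi ∈ ℕ ∪ {∞}`), where the flag
`opt` marks the variant `[lo,hi]?` that additionally allows zero iterations. -/
structure Iv : Type where
  lo : ℕ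
  hi : ℕ∞
  opt : Bool

/-- Membership of a number of iterations in the set denoted by an interval multiplicity. -/
def Iv.Mem (I : Iv) (n : ℕ) : Prop :=
  (I.lo ≤ n ∧ (n : ℕ∞) ≤ I.hi) ∨ (I.opt = true ∧ n = 0)

/-- The multiplicity `1 = [1,1]`. -/
def Iv.one : Iv := ⟨1, 1, false⟩
/-- The multiplicity `? = [0,1]`. -/
def Iv.qmark : Iv := ⟨0, 1, false⟩
/-- The multiplicity `+ = [1,∞]`. -/
def Iv.iplus : Iv := ⟨1, ⊤, false⟩
/-- The multiplicity `* = [0,∞]`. -/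
def Iv.istar : Iv := ⟨0, ⊤, false⟩

/-- An atom `(a₁^{I₁} || ⋯ || a_k^{I_k})`: a list of symbols, each with a
multiplicity `1` (flag `true`) or `?` (flag `false`). -/
abbrev Atom (σ : Type u) : Type u := List (σ × Bool)

/-- A clause `(A₁^{I₁} | ⋯ | A_k^{I_k})`: a list of atoms with interval multiplicities. -/
abbrev Clause (σ : Type u) : Type u := List (Atom σ × Iv)

/-- A disjunctive interval multiplicity expression `(D₁^{I₁} || ⋯ || D_k^{I_k})`
(as raw syntax; well-formedness is `DIME.WF`). -/
structure DIME (σ : Type u) : Type u where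
  clauses : List (Clause σ × Iv)

/-- Language of a single symbol with its multiplicity (`1` or `?`) inside an atom. -/
def atomEntryLang {σ : Type u} [DecidableEq σ] (p : σ × Bool) : Set (UWord σ) :=
  if p.2 = true then {UWord.single p.1} else {UWord.single p.1, UWord.zero}

/-- Unordered concatenation of the languages of the items of a list. -/
def listConcLang {σ : Type u} {α : Type v} (f : α → Set (UWord σ)) :
    List α → Set (UWord σ)
  | [] => {UWord.zero}
  | x :: xs => {w | ∃ w₁ ∈ f x, ∃ w₂ ∈ listConcLang f xs, w = w₁.add w₂}

/-- The language of an atom. -/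
def Atom.lang {σ : Type u} [DecidableEq σ] (A : Atom σ) : Set (UWord σ) :=
  listConcLang atomEntryLang A

/-- The language `L(E^I)` obtained by iterating a language `L` according to
an interval multiplicity `I`. -/
def iterLang {σ : Type u} (L : Set (UWord σ)) (I : Iv) : Set (UWord σ) :=
  {w | (∃ l : List (UWord σ),
          (∀ x ∈ l, x ∈ L) ∧ I.lo ≤ l.length ∧ (l.length : ℕ∞) ≤ I.hi ∧ w = listSum l) ∨
       (I.opt = true ∧ w = UWord.zero)}

/-- The language of a clause: disjunction of its atoms with intervals. -/
def Clause.lang {σ : Type u} [DecidableEq σ] (D : Clause σ) : Set (UWord σ) :=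
  {w | ∃ p ∈ D, w ∈ iterLang (Atom.lang p.1) p.2}

/-- The language of a DIME: the unordered concatenation of its clauses with intervals. -/
def DIME.lang {σ : Type u} [DecidableEq σ] (E : DIME σ) : Set (UWord σ) :=
  listConcLang (fun p => iterLang (Clause.lang p.1) p.2) E.clauses

/-- A clause is simple if all its atoms carry multiplicity `1` or `?`. -/
def Clause.Simple {σ : Type u} (D : Clause σ) : Prop :=
  ∀ p ∈ D, p.2 = Iv.one ∨ p.2 = Iv.qmark

/-- The list of all symbol occurrences in a DIME. -/
def DIME.symbols {σ : Type u} (E : DIME σ) : List σ :=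
  E.clauses.flatMap fun p => p.1.flatMap fun q => q.1.map Prod.fst

/-- Well-formedness of a DIME `(D₁^{I₁} || ⋯ || D_k^{I_k})`: each `D_i` is either a
simple clause with `I_i ∈ {+,*}`, or a clause with `I_i ∈ {1,?}`; moreover no symbol
occurs twice in the whole expression. -/
def DIME.WF {σ : Type u} (E : DIME σ) : Prop :=
  (∀ p ∈ E.clauses,
      (Clause.Simple p.1 ∧ (p.2 = Iv.iplus ∨ p.2 = Iv.istar)) ∨
      (p.2 = Iv.one ∨ p.2 = Iv.qmark)) ∧
  E.symbols.Nodup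

/-- Type 1 of a clause with interval in a reduced DIME:
`(A₁|…|A_k)^+` with `k ≥ 2` and every atom containing a symbol with multiplicity `1`. -/
def EntryType1 {σ : Type u} (D : Clause σ) (I : Iv) : Prop :=
  I = Iv.iplus ∧ 2 ≤ D.length ∧ ∀ p ∈ D, p.2 = Iv.one ∧ ∃ q ∈ p.1, q.2 = true

/-- Type 2 of a clause with interval in a reduced DIME:
`(A₁^{I₁}|…|A_k^{I_k})` where every atom contains a symbol with multiplicity `1`
and `0` belongs to no interval `I_i`. -/
def EntryType2 {σ : Type u} (D : Clause σ) (I : Iv) : Prop :=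
  I = Iv.one ∧ ∀ p ∈ D, (∃ q ∈ p.1, q.2 = true) ∧ ¬ p.2.Mem 0

/-- Type 3 of a clause with interval in a reduced DIME:
`(A₁^{I₁}|…|A_k^{I_k})` where `0` belongs to every interval `I_i`. -/
def EntryType3 {σ : Type u} (D : Clause σ) (I : Iv) : Prop :=
  I = Iv.one ∧ ∀ p ∈ D, p.2.Mem 0

/-- A DIME is reduced if each of its clauses with interval has type 1, 2 or 3. -/
def DIME.Reduced {σ : Type u} (E : DIME σ) : Prop :=
  ∀ p ∈ E.clauses, EntryType1 p.1 p.2 ∨ EntryType2 p.1 p.2 ∨ EntryType3 p.1 p.2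

/-!
Each entry `D^I` of a DIME is replaced by a list of reduced entries over a sublist of its
symbols whose concatenation has the same language. For `I ∈ {1, ?}`: if `ε ∈ L(D^I)`, all
intervals of `D` can be made optional (type 3); otherwise `I = 1`, and once the atoms with an
empty interval are discarded, every atom has a mandatory symbol and an interval avoiding `0`
(type 2). For `I ∈ {+, *}`: if `I = +` and `ε ∉ L(D)`, every atom of the simple clause `D` has
multiplicity `1` and a mandatory symbol (type 1, or type 2 as `A^+` when `D` has one atom);
otherwise `L(D^I) = L(D)^*` is the submonoid generated by the languages of the atoms, so
`L((A₁|…|A_k)^I) = L(A₁^*) ⊎ … ⊎ L(A_k^*)`, a concatenation of type-3 entries.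
-/

open scoped Pointwise

section

variable {σ : Type*} {α : Type*}

instance : AddCommMonoid (UWord σ) := inferInstanceAs (AddCommMonoid (σ → ℕ))

@[simp] lemma UWord.zero_eq_zero : (UWord.zero : UWord σ) = 0 := rfl

@[simp] lemma UWord.add_eq_add (w₁ w₂ : UWord σ) : w₁.add w₂ = w₁ + w₂ := rfl

@[simp] lemma listSum_eq_sum (l : List (UWord σ)) : listSum l = l.sum := rfl

lemma listConcLang_eq_sum (f : α → Set (UWord σ)) (l : List α) :
    listConcLang f l = (l.map f).sum := by
  induction l with
  | nil => rfl
  | cons x l ih =>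
    ext w
    simp only [listConcLang, ih, List.map_cons, List.sum_cons, Set.mem_add, UWord.add_eq_add]
    simp [eq_comm]

lemma listConcLang_flatMap {β : Type*} (f : β → Set (UWord σ)) (T : α → List β) (l : List α) :
    listConcLang f (l.flatMap T) = listConcLang (fun x => listConcLang f (T x)) l := by
  induction l with
  | nil => rfl
  | cons x l ih =>
    simp only [listConcLang_eq_sum, List.flatMap_cons, List.map_append, List.sum_append,
      List.map_cons, List.sum_cons] at ih ⊢
    rw [ih]

lemma listConcLang_congr {f g : α → Set (UWord σ)} {l : List α} (h : ∀ x ∈ l, f x = g x) :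
    listConcLang f l = listConcLang g l := by
  rw [listConcLang_eq_sum, listConcLang_eq_sum, List.map_congr_left h]

lemma listConcLang_map {β : Type*} (f : β → Set (UWord σ)) (g : α → β) (l : List α) :
    listConcLang f (l.map g) = listConcLang (f ∘ g) l := by
  rw [listConcLang_eq_sum, listConcLang_eq_sum, List.map_map]

namespace Iv

def isNonempty (I : Iv) : Bool := I.opt || decide ((I.lo : ℕ∞) ≤ I.hi)

lemma isNonempty_iff {I : Iv} : I.isNonempty ↔ ∃ n, I.Mem n := by
  simp only [isNonempty, Bool.or_eq_true, decide_eq_true_eq, Mem]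
  constructor
  · rintro (h | h)
    · exact ⟨0, Or.inr ⟨h, rfl⟩⟩
    · exact ⟨I.lo, Or.inl ⟨le_rfl, h⟩⟩
  · rintro ⟨n, ⟨hlo, hhi⟩ | ⟨h, -⟩⟩
    · exact Or.inr ((Nat.cast_le.2 hlo).trans hhi)
    · exact Or.inl h

/-- The interval `I?` of the paper. -/
def withZero (I : Iv) : Iv := ⟨I.lo, I.hi, true⟩

lemma mem_withZero {I : Iv} {n : ℕ} : I.withZero.Mem n ↔ I.Mem n ∨ n = 0 := by
  simp only [withZero, Mem, true_and]
  tauto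

lemma mem_one {n : ℕ} : Iv.one.Mem n ↔ n = 1 := by
  simp [Iv.one, Mem]
  omega

lemma mem_qmark {n : ℕ} : Iv.qmark.Mem n ↔ n ≤ 1 := by
  simp [Iv.qmark, Mem]

lemma mem_iplus {n : ℕ} : Iv.iplus.Mem n ↔ 1 ≤ n := by
  simp [Iv.iplus, Mem]

lemma mem_istar (n : ℕ) : Iv.istar.Mem n := by
  simp [Iv.istar, Mem]

end Iv

section iterLang

variable {L : Set (UWord σ)} {I : Iv}

lemma mem_iterLang {w : UWord σ} :
    w ∈ iterLang L I ↔ ∃ l : List (UWord σ), (∀ x ∈ l, x ∈ L) ∧ I.Mem l.length ∧ l.sum = w := by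
  simp only [iterLang, Set.mem_ofPred_eq, listSum_eq_sum, UWord.zero_eq_zero]
  constructor
  · rintro (⟨l, hl, hlo, hhi, rfl⟩ | ⟨hopt, rfl⟩)
    · exact ⟨l, hl, Or.inl ⟨hlo, hhi⟩, rfl⟩
    · exact ⟨[], by simp, Or.inr ⟨hopt, rfl⟩, rfl⟩
  · rintro ⟨l, hl, ⟨hlo, hhi⟩ | ⟨hopt, hlen⟩, rfl⟩
    · exact Or.inl ⟨l, hl, hlo, hhi, rfl⟩
    · exact Or.inr ⟨hopt, by simp [List.length_eq_zero_iff.1 hlen]⟩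

lemma iterLang_one (L : Set (UWord σ)) : iterLang L Iv.one = L := by
  ext w
  simp only [mem_iterLang, Iv.mem_one, List.length_eq_one_iff]
  constructor
  · rintro ⟨l, hl, ⟨x, rfl⟩, rfl⟩
    simpa using hl
  · exact fun hw => ⟨[w], by simpa using hw, ⟨w, rfl⟩, by simp⟩

lemma iterLang_qmark (L : Set (UWord σ)) : iterLang L Iv.qmark = insert 0 L := by
  ext w
  simp only [mem_iterLang, Iv.mem_qmark, Set.mem_insert_iff]
  constructor
  · rintro ⟨_ | ⟨x, _ | ⟨y, l⟩⟩, hl, hlen, rfl⟩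
    · exact Or.inl rfl
    · exact Or.inr (by simpa using hl)
    · simp at hlen
  · rintro (rfl | hw)
    · exact ⟨[], by simp, by simp, rfl⟩
    · exact ⟨[w], by simpa using hw, by simp, by simp⟩

lemma iterLang_istar (L : Set (UWord σ)) :
    iterLang L Iv.istar = AddSubmonoid.closure L := by
  ext w
  simp only [mem_iterLang, Iv.mem_istar, true_and, SetLike.mem_coe]
  constructor
  · rintro ⟨l, hl, rfl⟩
    exact AddSubmonoid.list_sum_mem _ fun x hx => AddSubmonoid.subset_closure (hl x hx)
  · exact AddSubmonoid.exists_list_of_mem_closure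

lemma iterLang_iplus_of_zero_mem (h : 0 ∈ L) : iterLang L Iv.iplus = iterLang L Iv.istar := by
  ext w
  simp only [mem_iterLang, Iv.mem_iplus, Iv.mem_istar, true_and]
  constructor
  · rintro ⟨l, hl, -, rfl⟩
    exact ⟨l, hl, rfl⟩
  · rintro ⟨l, hl, rfl⟩
    refine ⟨0 :: l, ?_, by simp, by simp⟩
    exact List.forall_mem_cons.2 ⟨h, hl⟩

lemma iterLang_withZero (L : Set (UWord σ)) (I : Iv) :
    iterLang L I.withZero = insert 0 (iterLang L I) := by
  ext w
  simp only [mem_iterLang, Iv.mem_withZero, Set.mem_insert_iff, List.length_eq_zero_iff]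
  constructor
  · rintro ⟨l, hl, hI | rfl, rfl⟩
    · exact Or.inr ⟨l, hl, hI, rfl⟩
    · exact Or.inl rfl
  · rintro (rfl | ⟨l, hl, hI, rfl⟩)
    · exact ⟨[], by simp, Or.inr rfl, rfl⟩
    · exact ⟨l, hl, Or.inl hI, rfl⟩

lemma iterLang_eq_empty_of_not_isNonempty (h : I.isNonempty = false) : iterLang L I = ∅ := by
  refine Set.eq_empty_of_forall_notMem fun w hw => ?_
  obtain ⟨l, -, hI, -⟩ := mem_iterLang.1 hw
  exact absurd (Iv.isNonempty_iff.2 ⟨_, hI⟩) (by simp [h])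

lemma iterLang_empty (h : ¬ I.Mem 0) : iterLang (∅ : Set (UWord σ)) I = ∅ := by
  refine Set.eq_empty_of_forall_notMem fun w hw => ?_
  obtain ⟨_ | ⟨x, l⟩, hl, hI, -⟩ := mem_iterLang.1 hw
  · exact h hI
  · exact hl x List.mem_cons_self

lemma zero_mem_iterLang_of_mem_zero (h : I.Mem 0) : 0 ∈ iterLang L I :=
  mem_iterLang.2 ⟨[], by simp, h, rfl⟩

lemma zero_mem_iterLang_of_zero_mem (h : 0 ∈ L) (hI : I.isNonempty) : 0 ∈ iterLang L I := by
  obtain ⟨n, hn⟩ := Iv.isNonempty_iff.1 hI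
  refine mem_iterLang.2 ⟨List.replicate n 0, ?_, by simpa using hn, by simp⟩
  simpa [List.mem_replicate] using fun _ => h

lemma closure_iterLang_of_simple (L : Set (UWord σ)) {J : Iv} (hJ : J = Iv.one ∨ J = Iv.qmark) :
    AddSubmonoid.closure (iterLang L J) = AddSubmonoid.closure L := by
  rcases hJ with rfl | rfl
  · rw [iterLang_one]
  · rw [iterLang_qmark, AddSubmonoid.closure_insert_zero]

end iterLang

section Clause

variable [DecidableEq σ]

lemma Atom.zero_mem_lang {A : Atom σ} (h : ∀ r ∈ A, r.2 = false) : 0 ∈ A.lang := by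
  induction A with
  | nil => exact rfl
  | cons r A ih =>
    refine ⟨0, ?_, 0, ih fun s hs => h s (List.mem_cons_of_mem _ hs), rfl⟩
    simp [atomEntryLang, h r List.mem_cons_self]

lemma Atom.exists_mandatory_of_zero_not_mem {A : Atom σ} {I : Iv} (hI : I.isNonempty)
    (h : 0 ∉ iterLang A.lang I) : ∃ r ∈ A, r.2 = true := by
  by_contra! hA
  exact h (zero_mem_iterLang_of_zero_mem (zero_mem_lang fun r hr => by simpa using hA r hr) hI)

@[simp] lemma Clause.lang_nil : Clause.lang ([] : Clause σ) = ∅ := by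
  simp [Clause.lang]

lemma Clause.lang_cons (q : Atom σ × Iv) (D : Clause σ) :
    Clause.lang (q :: D) = iterLang q.1.lang q.2 ∪ Clause.lang D := by
  ext w
  simp [Clause.lang]

lemma Clause.mem_lang_of_mem {D : Clause σ} {q : Atom σ × Iv} (hq : q ∈ D) :
    iterLang q.1.lang q.2 ⊆ Clause.lang D :=
  fun _ hw => ⟨q, hq, hw⟩

lemma Clause.lang_filter_isNonempty (D : Clause σ) :
    Clause.lang (D.filter (·.2.isNonempty)) = Clause.lang D := by
  ext w
  simp only [Clause.lang, Set.mem_ofPred_eq, List.mem_filter]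
  constructor
  · rintro ⟨q, ⟨hq, -⟩, hw⟩
    exact ⟨q, hq, hw⟩
  · rintro ⟨q, hq, hw⟩
    refine ⟨q, ⟨hq, ?_⟩, hw⟩
    by_contra h
    rw [iterLang_eq_empty_of_not_isNonempty (by simpa using h)] at hw
    exact hw

/-- Every interval of `D` made optional; the leading empty atom `()?` puts `ε` into the
language even when `D` has no atoms. -/
def Clause.optional (D : Clause σ) : Clause σ :=
  ([], Iv.qmark) :: D.map fun q => (q.1, q.2.withZero)

lemma Clause.lang_optional (D : Clause σ) : D.optional.lang = insert 0 D.lang := by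
  have hnil : iterLang (Atom.lang ([] : Atom σ)) Iv.qmark = {0} := by
    rw [iterLang_qmark]
    exact Set.insert_eq_of_mem rfl
  ext w
  rw [Clause.optional, Clause.lang_cons, hnil, Set.mem_union, Set.mem_insert_iff,
    Set.mem_singleton_iff]
  constructor
  · rintro (rfl | ⟨_, hq, hw⟩)
    · exact Or.inl rfl
    · obtain ⟨q, hqD, rfl⟩ := List.mem_map.1 hq
      rw [iterLang_withZero] at hw
      exact hw.imp id fun hw => ⟨q, hqD, hw⟩
  · rintro (rfl | ⟨q, hq, hw⟩)
    · exact Or.inl rfl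
    · refine Or.inr ⟨_, List.mem_map_of_mem hq, ?_⟩
      rw [iterLang_withZero]
      exact Or.inr hw

lemma Clause.closure_lang (D : Clause σ) :
    (AddSubmonoid.closure (Clause.lang D) : Set (UWord σ)) =
      listConcLang (fun q => AddSubmonoid.closure (iterLang q.1.lang q.2)) D := by
  induction D with
  | nil => simp [listConcLang]
  | cons q D ih =>
    rw [Clause.lang_cons, AddSubmonoid.closure_union, AddSubmonoid.coe_sup, ih,
      listConcLang_eq_sum, listConcLang_eq_sum, List.map_cons, List.sum_cons]

lemma Clause.Simple.forall_of_zero_not_mem {D : Clause σ} (hD : Clause.Simple D)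
    (h : 0 ∉ Clause.lang D) : ∀ q ∈ D, q.2 = Iv.one ∧ ∃ r ∈ q.1, r.2 = true := by
  intro q hq
  have hq0 : 0 ∉ iterLang q.1.lang q.2 := fun h0 => h (Clause.mem_lang_of_mem hq h0)
  rcases hD q hq with h1 | h1
  · refine ⟨h1, Atom.exists_mandatory_of_zero_not_mem ?_ hq0⟩
    simp [h1, Iv.isNonempty, Iv.one]
  · exact absurd (zero_mem_iterLang_of_mem_zero (by simp [Iv.mem_qmark])) (h1 ▸ hq0)

end Clause

def entrySymbols (p : Clause σ × Iv) : List σ := p.1.flatMap fun q => q.1.map Prod.fst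

def EntryWF (p : Clause σ × Iv) : Prop :=
  (Clause.Simple p.1 ∧ (p.2 = Iv.iplus ∨ p.2 = Iv.istar)) ∨ (p.2 = Iv.one ∨ p.2 = Iv.qmark)

def EntryReduced (p : Clause σ × Iv) : Prop :=
  EntryType1 p.1 p.2 ∨ EntryType2 p.1 p.2 ∨ EntryType3 p.1 p.2

section Entry

variable [DecidableEq σ]

def entryLang (p : Clause σ × Iv) : Set (UWord σ) := iterLang (Clause.lang p.1) p.2

/-- `R` may replace the entry `p` of a DIME without changing its language or breaking
well-formedness. -/
structure IsReducedRewriting (p : Clause σ × Iv) (R : List (Clause σ × Iv)) : Prop where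
  forall_mem : ∀ x ∈ R, EntryWF x ∧ EntryReduced x
  symbols_sublist : (R.flatMap entrySymbols).Sublist (entrySymbols p)
  lang_eq : listConcLang entryLang R = entryLang p

lemma isReducedRewriting_singleton {p x : Clause σ × Iv} (hx : EntryWF x) (hr : EntryReduced x)
    (hsym : (entrySymbols x).Sublist (entrySymbols p)) (hlang : entryLang x = entryLang p) :
    IsReducedRewriting p [x] where
  forall_mem := by simpa using ⟨hx, hr⟩
  symbols_sublist := by simpa using hsym
  lang_eq := by simpa [listConcLang_eq_sum] using hlang

lemma isReducedRewriting_self {p : Clause σ × Iv} (hp : EntryWF p) (hr : EntryReduced p) :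
    IsReducedRewriting p [p] :=
  isReducedRewriting_singleton hp hr (List.Sublist.refl _) rfl

lemma isReducedRewriting_of_zero_mem {D : Clause σ} {I : Iv} (hI : I = Iv.one ∨ I = Iv.qmark)
    (h0 : 0 ∈ entryLang (D, I)) :
    IsReducedRewriting (D, I) [(D.optional, Iv.one)] := by
  have hzero : ∀ q ∈ D.optional, q.2.Mem 0 := by
    simp only [Clause.optional, List.mem_cons, List.mem_map]
    rintro _ (rfl | ⟨q, -, rfl⟩)
    · exact Iv.mem_qmark.2 zero_le_one
    · exact Iv.mem_withZero.2 (Or.inr rfl)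
  refine isReducedRewriting_singleton (Or.inr (Or.inl rfl)) (Or.inr (Or.inr ⟨rfl, hzero⟩))
    (by simp [entrySymbols, Clause.optional, List.flatMap_map]) ?_
  simp only [entryLang, iterLang_one, Clause.lang_optional] at h0 ⊢
  rcases hI with rfl | rfl
  · rw [iterLang_one] at h0 ⊢
    exact Set.insert_eq_of_mem h0
  · rw [iterLang_qmark]

lemma isReducedRewriting_of_zero_not_mem {D : Clause σ} {I : Iv}
    (hI : I = Iv.one ∨ I = Iv.qmark) (h0 : 0 ∉ entryLang (D, I)) :
    IsReducedRewriting (D, I) [(D.filter (·.2.isNonempty), Iv.one)] := by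
  obtain rfl : I = Iv.one := hI.resolve_right fun hq =>
    h0 (zero_mem_iterLang_of_mem_zero (by simp [hq, Iv.mem_qmark]))
  simp only [entryLang, iterLang_one] at h0
  refine isReducedRewriting_singleton (Or.inr (Or.inl rfl)) (Or.inr (Or.inl ⟨rfl, ?_⟩))
    (List.filter_sublist.flatMap _) (by simp [entryLang, Clause.lang_filter_isNonempty])
  intro q hq
  obtain ⟨hqD, hne⟩ := List.mem_filter.1 hq
  have hq0 : 0 ∉ iterLang q.1.lang q.2 := fun h => h0 (Clause.mem_lang_of_mem hqD h)
  exact ⟨Atom.exists_mandatory_of_zero_not_mem hne hq0,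
    fun hm => hq0 (zero_mem_iterLang_of_mem_zero hm)⟩

lemma isReducedRewriting_of_length_le_one {D : Clause σ}
    (hD : ∀ q ∈ D, q.2 = Iv.one ∧ ∃ r ∈ q.1, r.2 = true) (hlen : D.length ≤ 1) :
    IsReducedRewriting (D, Iv.iplus) [(D.map fun q => (q.1, Iv.iplus), Iv.one)] := by
  refine isReducedRewriting_singleton (Or.inr (Or.inl rfl)) (Or.inr (Or.inl ⟨rfl, ?_⟩))
    (by simp [entrySymbols, List.flatMap_map]) ?_
  · simp only [List.mem_map]
    rintro _ ⟨q, hq, rfl⟩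
    exact ⟨(hD q hq).2, by simp [Iv.mem_iplus]⟩
  · obtain _ | ⟨q, _ | ⟨q', D⟩⟩ := D
    · simp [entryLang, iterLang_one, iterLang_empty, Iv.mem_iplus]
    · simp [entryLang, iterLang_one, Clause.lang_cons, (hD q List.mem_cons_self).1]
    · simp at hlen

lemma isReducedRewriting_of_star {D : Clause σ} {I : Iv} (hD : Clause.Simple D)
    (hI : iterLang (Clause.lang D) I = iterLang (Clause.lang D) Iv.istar) :
    IsReducedRewriting (D, I) (D.map fun q => ([(q.1, Iv.istar)], Iv.one)) where
  forall_mem := by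
    simp only [List.mem_map]
    rintro _ ⟨q, -, rfl⟩
    exact ⟨Or.inr (Or.inl rfl), Or.inr (Or.inr ⟨rfl, by simp [Iv.mem_istar]⟩)⟩
  symbols_sublist := by simp [entrySymbols, List.flatMap_map]
  lang_eq := calc
    _ = listConcLang (fun q => AddSubmonoid.closure q.1.lang) D := by
      rw [listConcLang_map]
      refine listConcLang_congr fun q _ => ?_
      simp [entryLang, iterLang_one, Clause.lang_cons, iterLang_istar]
    _ = listConcLang (fun q => AddSubmonoid.closure (iterLang q.1.lang q.2)) D :=
      listConcLang_congr fun q hq => by rw [closure_iterLang_of_simple _ (hD q hq)]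
    _ = entryLang (D, I) := by rw [← Clause.closure_lang, entryLang, hI, iterLang_istar]

theorem exists_isReducedRewriting {p : Clause σ × Iv} (hp : EntryWF p) :
    ∃ R, IsReducedRewriting p R := by
  obtain ⟨D, I⟩ := p
  rcases hp with ⟨hD, hI⟩ | hI
  · by_cases hplus : I = Iv.iplus ∧ 0 ∉ Clause.lang D
    · obtain ⟨rfl, h0⟩ := hplus
      have hatoms := hD.forall_of_zero_not_mem h0
      by_cases hlen : 2 ≤ D.length
      · exact ⟨_, isReducedRewriting_self (Or.inl ⟨hD, hI⟩) (Or.inl ⟨rfl, hlen, hatoms⟩)⟩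
      · exact ⟨_, isReducedRewriting_of_length_le_one hatoms (by omega)⟩
    · refine ⟨_, isReducedRewriting_of_star hD ?_⟩
      rcases hI with rfl | rfl
      · exact iterLang_iplus_of_zero_mem (by simpa using hplus)
      · rfl
  · by_cases h0 : 0 ∈ entryLang (D, I)
    · exact ⟨_, isReducedRewriting_of_zero_mem hI h0⟩
    · exact ⟨_, isReducedRewriting_of_zero_not_mem hI h0⟩

theorem DIME.exists_reduced_of_forall_isReducedRewriting {E : DIME σ} (hE : E.symbols.Nodup)
    (h : ∀ p ∈ E.clauses, ∃ R, IsReducedRewriting p R) :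
    ∃ E' : DIME σ, E'.WF ∧ E'.Reduced ∧ E'.lang = E.lang := by
  choose! T hT using h
  have hsym : ((E.clauses.flatMap T).flatMap entrySymbols).Sublist
      (E.clauses.flatMap entrySymbols) := by
    rw [List.flatMap_assoc]
    exact List.Sublist.flatMap_right _ fun p hp => (hT p hp).symbols_sublist
  refine ⟨⟨E.clauses.flatMap T⟩, ⟨fun x hx => ?_, hsym.nodup hE⟩, fun x hx => ?_, ?_⟩
  · obtain ⟨p, hp, hx⟩ := List.mem_flatMap.1 hx
    exact ((hT p hp).forall_mem x hx).1
  · obtain ⟨p, hp, hx⟩ := List.mem_flatMap.1 hx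
    exact ((hT p hp).forall_mem x hx).2
  · exact (listConcLang_flatMap entryLang T E.clauses).trans
      (listConcLang_congr fun p hp => (hT p hp).lang_eq)

end Entry

end

theorem statement0_general {σ : Type} [DecidableEq σ]
    (E : DIME σ) (hE : E.WF) :
    ∃ E' : DIME σ, E'.WF ∧ E'.Reduced ∧ DIME.lang E' = DIME.lang E :=
  DIME.exists_reduced_of_forall_isReducedRewriting hE.2 fun _ hp =>
    exists_isReducedRewriting (hE.1 _ hp)

/-- Every DIME can be rewritten into an equivalent reduced DIME:
for every DIME `E` over a finite alphabet `σ` there exists a reduced DIME `E'`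
over `σ` such that `L(E') = L(E)`. -/
theorem statement0 {σ : Type} [DecidableEq σ] [Fintype σ]
    (E : DIME σ) (hE : E.WF) :
    ∃ E' : DIME σ, E'.WF ∧ E'.Reduced ∧ DIME.lang E' = DIME.lang E :=
  statement0_general E hE
end

section
/- For every IMS S and every tree t with t ∈ L(S), there exists a simulation of the universal dependency graph G_S^∀ of S in t. -/
set_option autoImplicit false

universe u v w

/-- An unordered tree: a finite set of nodes, a root, a labeling with symbols of `σ`,
and an acyclic parent–child relation in which every non-root node has exactly one
parent. -/
structure UTree (σ : Type u) (ν : Type v) : Type (max u v) where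
  nodes : Finset ν
  root : ν
  root_mem : root ∈ nodes
  lab : ν → σ
  child : ν → ν → Prop
  child_mem : ∀ {m n : ν}, child m n → m ∈ nodes ∧ n ∈ nodes
  parent_unique : ∀ n ∈ nodes, n ≠ root → ∃! m : ν, child m n
  acyclic : ∀ n : ν, ¬ Relation.TransGen child n n

/-- The unordered word of (labels of) children of a node of a tree. -/
noncomputable def UTree.childWord {σ : Type u} {ν : Type v} (t : UTree σ ν) (n : ν) :
    UWord σ :=
  fun a => {m : ν | t.child n m ∧ t.lab m = a}.ncard

/-- A twig query: a tree with labels in `σ ∪ {⋆}` (`none` is the wildcard `⋆`) and two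
disjoint edge relations, child edges and descendant edges. -/
structure Twig (σ : Type u) (ν : Type v) : Type (max u v) where
  nodes : Finset ν
  root : ν
  root_mem : root ∈ nodes
  lab : ν → Option σ
  child : ν → ν → Prop
  desc : ν → ν → Prop
  child_mem : ∀ {m n : ν}, child m n → m ∈ nodes ∧ n ∈ nodes
  desc_mem : ∀ {m n : ν}, desc m n → m ∈ nodes ∧ n ∈ nodes
  edges_disjoint : ∀ m n : ν, ¬(child m n ∧ desc m n)
  parent_unique : ∀ n ∈ nodes, n ≠ root → ∃! m : ν, (child m n ∨ desc m n)
  acyclic : ∀ n : ν, ¬ Relation.TransGen (fun x y => child x y ∨ desc x y) n n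

/-- `q.Sat t`, written `t ⊨ q`: there exists an embedding of the twig query `q`
in the tree `t`. -/
def Twig.Sat {σ : Type u} {ν : Type v} {μ : Type w} (q : Twig σ ν) (t : UTree σ μ) :
    Prop :=
  ∃ f : ν → μ,
    f q.root = t.root ∧
    (∀ n ∈ q.nodes, f n ∈ t.nodes) ∧
    (∀ m n : ν, q.child m n → t.child (f m) (f n)) ∧
    (∀ m n : ν, q.desc m n → Relation.TransGen t.child (f m) (f n)) ∧
    (∀ n ∈ q.nodes, q.lab n = none ∨ q.lab n = some (t.lab (f n)))

/-- Embedding of a tree `s` in a tree `t` (viewing `s` as a twig query with only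
child edges and no wildcards). -/
def UTree.EmbedsIn {σ : Type u} {ν : Type v} {μ : Type w} (s : UTree σ ν)
    (t : UTree σ μ) : Prop :=
  ∃ f : ν → μ,
    f s.root = t.root ∧
    (∀ n ∈ s.nodes, f n ∈ t.nodes) ∧
    (∀ m n : ν, s.child m n → t.child (f m) (f n)) ∧
    (∀ n ∈ s.nodes, s.lab n = t.lab (f n))

/-- A rooted directed graph with vertex set `σ`. -/
structure RGraph (σ : Type u) : Type u where
  root : σ
  edge : σ → σ → Prop

/-- `symbols∃(L)`: the symbols present in at least one unordered word of `L`. -/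
def symbolsE {σ : Type u} (L : Set (UWord σ)) : Set σ := {a | ∃ w ∈ L, w a ≠ 0}

/-- `symbols∀(L)`: the symbols present in every unordered word of `L`. -/
def symbolsA {σ : Type u} (L : Set (UWord σ)) : Set σ := {a | ∀ w ∈ L, w a ≠ 0}

/-- A simulation of a rooted directed graph `G` in a tree `t`. -/
def RGraph.SimulatesIn {σ : Type u} {ν : Type v} (G : RGraph σ) (t : UTree σ ν) : Prop :=
  ∃ R : σ → ν → Prop,
    R G.root t.root ∧
    (∀ a : σ, ∀ n : ν, R a n → n ∈ t.nodes) ∧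
    (∀ a : σ, ∀ n : ν, R a n → ∀ b : σ, G.edge a b → ∃ n' : ν, t.child n n' ∧ R b n') ∧
    (∀ a : σ, ∀ n : ν, R a n → t.lab n = a)

/-- The graph `G` has no cycle reachable from its root. -/
def RGraph.NoReachCycle {σ : Type u} (G : RGraph σ) : Prop :=
  ∀ a : σ, Relation.ReflTransGen G.edge G.root a → ¬ Relation.TransGen G.edge a a

/-- A path of `G`: a nonempty sequence of vertices starting at the root such that
consecutive vertices are joined by an edge of `G`. -/
def RGraph.IsPath {σ : Type u} (G : RGraph σ) (l : List σ) : Prop :=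
  l ≠ [] ∧ l.head? = some G.root ∧ l.Chain' G.edge

/-- `t` is the unfolding `u_G` of the graph `G`: its nodes are the paths of `G`,
its root is the one-element path, nodes `p` and `p·a` are joined by a child edge,
and each node is labeled by its last vertex. -/
def RGraph.IsUnfolding {σ : Type u} (G : RGraph σ) (t : UTree σ (List σ)) : Prop :=
  (∀ l : List σ, l ∈ t.nodes ↔ G.IsPath l) ∧
  t.root = [G.root] ∧
  (∀ p q : List σ, t.child p q ↔ (G.IsPath p ∧ G.IsPath q ∧ ∃ a : σ, q = p ++ [a])) ∧
  (∀ p ∈ t.nodes, t.lab p = p.getLastD G.root)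

/-- Embedding of a twig query `q` in a rooted directed graph `G`. -/
def Twig.SatGraph {σ : Type u} {ν : Type v} (q : Twig σ ν) (G : RGraph σ) : Prop :=
  ∃ f : ν → σ,
    f q.root = G.root ∧
    (∀ m n : ν, q.child m n → G.edge (f m) (f n)) ∧
    (∀ m n : ν, q.desc m n → Relation.TransGen G.edge (f m) (f n)) ∧
    (∀ n ∈ q.nodes, q.lab n = none ∨ q.lab n = some (f n))

/-- Embedding of a tree `t` (viewed as a twig query with only child edges)
in a rooted directed graph `G`. -/
def UTree.SatGraph {σ : Type u} {ν : Type v} (t : UTree σ ν) (G : RGraph σ) : Prop :=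
  ∃ f : ν → σ,
    f t.root = G.root ∧
    (∀ m n : ν, t.child m n → G.edge (f m) (f n)) ∧
    (∀ n ∈ t.nodes, t.lab n = f n)

/-- A schema: a designated root label together with a map from symbols to DIMEs.
(For a DIMS the rules are well-formed DIMEs — `Schema.WF`; for an IMS they are
moreover disjunction-free — `Schema.DisjFree`.) -/
structure Schema (σ : Type u) : Type u where
  root : σ
  rules : σ → DIME σ

/-- All rules of the schema are well-formed DIMEs. -/
def Schema.WF {σ : Type u} (S : Schema σ) : Prop := ∀ a : σ, (S.rules a).WF

/-- The schema is disjunction-free (an IMS): every clause of every rule consists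
of a single atom. -/
def Schema.DisjFree {σ : Type u} (S : Schema σ) : Prop :=
  ∀ a : σ, ∀ p ∈ (S.rules a).clauses, p.1.length = 1

/-- `S.Mem t`, written `t ∈ L(S)`: the root of `t` carries the root label of `S` and,
for every node, the unordered word of labels of its children belongs to the language
of the rule for the node's label. -/
def Schema.Mem {σ : Type u} [DecidableEq σ] {ν : Type v} (S : Schema σ)
    (t : UTree σ ν) : Prop :=
  t.lab t.root = S.root ∧ ∀ n ∈ t.nodes, t.childWord n ∈ DIME.lang (S.rules (t.lab n))

/-- The existential dependency graph `G_S^∃` of a schema `S`. -/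
def Schema.existGraph {σ : Type u} [DecidableEq σ] (S : Schema σ) : RGraph σ :=
  ⟨S.root, fun a b => b ∈ symbolsE (DIME.lang (S.rules a))⟩

/-- The universal dependency graph `G_S^∀` of a schema `S`. -/
def Schema.univGraph {σ : Type u} [DecidableEq σ] (S : Schema σ) : RGraph σ :=
  ⟨S.root, fun a b => b ∈ symbolsA (DIME.lang (S.rules a))⟩

/-- For every IMS `S` and every tree `t` with `t ∈ L(S)`, there exists
a simulation of the universal dependency graph `G_S^∀` of `S` in `t`. -/
theorem statement13 {σ : Type} [DecidableEq σ] [Fintype σ]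
    (S : Schema σ) (hWF : S.WF) (hDF : S.DisjFree)
    {ν : Type} (t : UTree σ ν) (ht : S.Mem t) :
    S.univGraph.SimulatesIn t := by
  refine ⟨fun a n => n ∈ t.nodes ∧ t.lab n = a, ⟨t.root_mem, ht.1⟩,
    fun a n h => h.1, ?_, fun a n h => h.2⟩
  rintro a n ⟨hn, rfl⟩ b hb
  have hw := ht.2 n hn
  have hne : t.childWord n b ≠ 0 := hb _ hw
  have : {m : ν | t.child n m ∧ t.lab m = b}.Nonempty :=
    Set.nonempty_of_ncard_ne_zero hne
  obtain ⟨m, hm1, hm2⟩ := this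
  exact ⟨m, hm1, (t.child_mem hm1).2, hm2⟩
end

section
/- Let G = (Σ, root, E) be a rooted directed graph over Σ with no cycle reachable from its root, and let t be a tree. Then G can be simulated in t if and only if there exists an embedding of the unfolding u_G of G in t. -/
set_option autoImplicit false

universe u v w

/-! A simulation `R` yields an embedding of the unfolding by following each path of `G` from the
root of `t`, stepping at each edge `a → b` to a child related to `b` by `R`; conversely, an
embedding `f` of the unfolding yields the simulation relating the last vertex of every path `p`
to `f p`. -/

namespace RGraph

variable {σ : Type*} {G : RGraph σ}

theorem isPath_singleton_iff {a : σ} : G.IsPath [a] ↔ a = G.root := by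
  simp [IsPath, List.Chain']

theorem isPath_append_singleton_iff {p : List σ} {b : σ} (hp : p ≠ []) :
    G.IsPath (p ++ [b]) ↔ G.IsPath p ∧ G.edge (p.getLastD G.root) b := by
  obtain ⟨l, a, rfl⟩ := List.eq_nil_or_concat p |>.resolve_left hp
  simp only [IsPath, List.Chain', List.isChain_append]
  simp [and_assoc]

theorem IsUnfolding.child_iff {u : UTree σ (List σ)} (hu : G.IsUnfolding u) {p q : List σ} :
    u.child p q ↔ G.IsPath p ∧ ∃ b, G.edge (p.getLastD G.root) b ∧ q = p ++ [b] := by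
  rw [hu.2.2.1]
  constructor
  · rintro ⟨hp, hq, b, rfl⟩
    exact ⟨hp, b, ((isPath_append_singleton_iff hp.1).1 hq).2, rfl⟩
  · rintro ⟨hp, b, he, rfl⟩
    exact ⟨hp, (isPath_append_singleton_iff hp.1).2 ⟨hp, he⟩, b, rfl⟩

end RGraph

section FollowPath

variable {σ ν : Type*}

def followPath (next : σ → ν → ν) (n₀ : ν) (p : List σ) : ν :=
  p.tail.foldl (fun n b => next b n) n₀

theorem followPath_append_singleton (next : σ → ν → ν) (n₀ : ν) {p : List σ} (hp : p ≠ [])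
    (b : σ) : followPath next n₀ (p ++ [b]) = next b (followPath next n₀ p) := by
  simp [followPath, List.tail_append_of_ne_nil hp]

theorem exists_successor_choice {E : σ → σ → Prop} {C : ν → ν → Prop} {R : σ → ν → Prop}
    (h : ∀ a n, R a n → ∀ b, E a b → ∃ n', C n n' ∧ R b n') :
    ∃ next : σ → ν → ν, ∀ a n, R a n → ∀ b, E a b → C n (next b n) ∧ R b (next b n) := by
  have : ∀ b n, ∃ n', (∃ m, C n m ∧ R b m) → C n n' ∧ R b n' := fun b n => by
    by_cases hex : ∃ m, C n m ∧ R b m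
    · exact ⟨hex.choose, fun _ => hex.choose_spec⟩
    · exact ⟨n, fun h' => absurd h' hex⟩
  choose next hnext using this
  exact ⟨next, fun a n hR b he => hnext b n (h a n hR b he)⟩

theorem RGraph.rel_followPath {G : RGraph σ} {R : σ → ν → Prop} {next : σ → ν → ν} {n₀ : ν}
    (hroot : R G.root n₀) (hnext : ∀ a n, R a n → ∀ b, G.edge a b → R b (next b n)) :
    ∀ p, G.IsPath p → R (p.getLastD G.root) (followPath next n₀ p) := by
  intro p
  induction p using List.reverseRecOn with
  | nil => exact fun h => absurd rfl h.1
  | append_singleton p b ih =>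
    intro h
    rcases eq_or_ne p [] with rfl | hp
    · obtain rfl := G.isPath_singleton_iff.1 h
      exact hroot
    · obtain ⟨hpath, he⟩ := (G.isPath_append_singleton_iff hp).1 h
      rw [followPath_append_singleton next n₀ hp, List.getLastD_concat]
      exact hnext _ _ (ih hpath) b he

end FollowPath

namespace RGraph.IsUnfolding

variable {σ ν : Type*} {G : RGraph σ} {u : UTree σ (List σ)} {t : UTree σ ν}

theorem embedsIn_of_simulatesIn (hu : G.IsUnfolding u) (h : G.SimulatesIn t) : u.EmbedsIn t := by
  obtain ⟨R, hroot, hmem, hstep, hlab⟩ := h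
  obtain ⟨next, hnext⟩ := exists_successor_choice hstep
  have hR := G.rel_followPath hroot fun a n hR b he => (hnext a n hR b he).2
  refine ⟨followPath next t.root, by rw [hu.2.1]; rfl,
    fun p hp => hmem _ _ (hR p ((hu.1 p).1 hp)), fun p q hpq => ?_, fun p hp => ?_⟩
  · obtain ⟨hp, b, he, rfl⟩ := hu.child_iff.1 hpq
    rw [followPath_append_singleton next t.root hp.1]
    exact (hnext _ _ (hR p hp) b he).1
  · rw [hu.2.2.2 p hp]
    exact (hlab _ _ (hR p ((hu.1 p).1 hp))).symm

theorem simulatesIn_of_embedsIn (hu : G.IsUnfolding u) (h : u.EmbedsIn t) : G.SimulatesIn t := by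
  obtain ⟨f, hf_root, hf_mem, hf_child, hf_lab⟩ := h
  refine ⟨fun a n => ∃ p, G.IsPath p ∧ p.getLastD G.root = a ∧ f p = n,
    ⟨[G.root], isPath_singleton_iff.2 rfl, rfl, hu.2.1 ▸ hf_root⟩, ?_, ?_, ?_⟩
  · rintro a n ⟨p, hp, -, rfl⟩
    exact hf_mem p ((hu.1 p).2 hp)
  · rintro a n ⟨p, hp, rfl, rfl⟩ b he
    have hq : G.IsPath (p ++ [b]) := (isPath_append_singleton_iff hp.1).2 ⟨hp, he⟩
    exact ⟨f (p ++ [b]), hf_child _ _ (hu.child_iff.2 ⟨hp, b, he, rfl⟩), p ++ [b], hq,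
      List.getLastD_concat, rfl⟩
  · rintro a n ⟨p, hp, rfl, rfl⟩
    have hmem := (hu.1 p).2 hp
    rw [← hf_lab p hmem, hu.2.2.2 p hmem]

end RGraph.IsUnfolding

theorem statement14_general {σ : Type} (G : RGraph σ)
    (u : UTree σ (List σ)) (hu : G.IsUnfolding u)
    {ν : Type} (t : UTree σ ν) :
    G.SimulatesIn t ↔ u.EmbedsIn t :=
  ⟨hu.embedsIn_of_simulatesIn, hu.simulatesIn_of_embedsIn⟩

/-- Let `G` be a rooted directed graph over `σ` with no cycle
reachable from its root, and let `t` be a tree.  Then `G` can be simulated in `t`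
if and only if there exists an embedding of the unfolding `u_G` of `G` in `t`. -/
theorem statement14 {σ : Type} [Fintype σ] (G : RGraph σ) (hG : G.NoReachCycle)
    (u : UTree σ (List σ)) (hu : G.IsUnfolding u)
    {ν : Type} (t : UTree σ ν) :
    G.SimulatesIn t ↔ u.EmbedsIn t :=
  statement14_general G u hu t
end

section
/- The fuse and add operations preserve embeddings of twig queries: for every twig query q and trees t and t', if there exists an embedding of q in t and t ⊴ t', then there exists an embedding of q in t'. -/
set_option autoImplicit false

universe u v w

/-- The fuse operation: `t'` is obtained from `t` by fusing two sibling nodes `n₁, n₂`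
carrying the same label into a single node (`n₁`), whose children are all the children
of the two fused nodes. -/
def FuseStep {σ : Type u} {ν : Type v} [DecidableEq ν] (t t' : UTree σ ν) : Prop :=
  ∃ p n₁ n₂ : ν, n₁ ∈ t.nodes ∧ n₂ ∈ t.nodes ∧ n₁ ≠ n₂ ∧
    t.child p n₁ ∧ t.child p n₂ ∧ t.lab n₁ = t.lab n₂ ∧
    t'.nodes = t.nodes.erase n₂ ∧
    t'.root = t.root ∧
    (∀ n ∈ t'.nodes, t'.lab n = t.lab n) ∧
    (∀ m n : ν, t'.child m n ↔
        (m ≠ n₂ ∧ n ≠ n₂ ∧ (t.child m n ∨ (m = n₁ ∧ t.child n₂ n))))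

/-- The add operation: `t'` is obtained from `t` by attaching a new subtree
(rooted at a fresh node `r'`) as an additional child subtree of a node `n₀` of `t`. -/
def AddStep {σ : Type u} {ν : Type v} (t t' : UTree σ ν) : Prop :=
  ∃ n₀ r' : ν, n₀ ∈ t.nodes ∧ r' ∉ t.nodes ∧ r' ∈ t'.nodes ∧
    t'.root = t.root ∧
    t.nodes ⊆ t'.nodes ∧
    (∀ n ∈ t.nodes, t'.lab n = t.lab n) ∧
    t'.child n₀ r' ∧
    (∀ m n : ν, m ∈ t.nodes → n ∈ t.nodes → (t'.child m n ↔ t.child m n)) ∧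
    (∀ m n : ν, t'.child m n → n ∈ t.nodes → m ∈ t.nodes) ∧
    (∀ m n : ν, t'.child m n → m ∈ t.nodes → n ∉ t.nodes → (m = n₀ ∧ n = r'))

/-- `t ⊴ t'`: the reflexive–transitive closure of single fuse and add steps. -/
def TreeLE {σ : Type u} {ν : Type v} [DecidableEq ν] : UTree σ ν → UTree σ ν → Prop :=
  Relation.ReflTransGen (fun t t' => FuseStep t t' ∨ AddStep t t')

/-!
Every fuse or add step `t ⊲₀ t'` induces a homomorphism of trees `t → t'` (the identity,
except that a fuse sends the erased node `n₂` to `n₁`), so `t ⊴ t'` makes `t` embed in `t'`.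
Composing an embedding of `q` in `t` with it embeds `q` in `t'`: child edges go to child
edges and hence descendant edges to descendant edges, and labels are kept.
-/

namespace UTree

variable {σ : Type u} {ν : Type v} {μ : Type w}

theorem EmbedsIn.refl (t : UTree σ ν) : t.EmbedsIn t :=
  ⟨id, rfl, fun _ hn => hn, fun _ _ h => h, fun _ _ => rfl⟩

theorem EmbedsIn.trans {κ : Type*} {s : UTree σ ν} {t : UTree σ μ} {r : UTree σ κ}
    (hst : s.EmbedsIn t) (htr : t.EmbedsIn r) : s.EmbedsIn r := by
  obtain ⟨f, hf_root, hf_mem, hf_child, hf_lab⟩ := hst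
  obtain ⟨g, hg_root, hg_mem, hg_child, hg_lab⟩ := htr
  refine ⟨g ∘ f, by simp [hf_root, hg_root], fun n hn => hg_mem _ (hf_mem n hn),
    fun m n h => hg_child _ _ (hf_child m n h), fun n hn => ?_⟩
  rw [hf_lab n hn, hg_lab _ (hf_mem n hn), Function.comp_apply]

theorem eq_of_child_of_child {t : UTree σ ν} {a b n : ν} (hn : n ≠ t.root)
    (ha : t.child a n) (hb : t.child b n) : a = b :=
  (t.parent_unique n (t.child_mem ha).2 hn).unique ha hb

end UTree

theorem Twig.Sat.of_embedsIn {σ : Type u} {ν : Type v} {μ : Type w} {κ : Type*}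
    {q : Twig σ κ} {t : UTree σ ν} {t' : UTree σ μ} (hq : q.Sat t) (ht : t.EmbedsIn t') :
    q.Sat t' := by
  obtain ⟨f, hf_root, hf_mem, hf_child, hf_desc, hf_lab⟩ := hq
  obtain ⟨g, hg_root, hg_mem, hg_child, hg_lab⟩ := ht
  refine ⟨g ∘ f, by simp [hf_root, hg_root], fun n hn => hg_mem _ (hf_mem n hn),
    fun m n h => hg_child _ _ (hf_child m n h),
    fun m n h => (hf_desc m n h).lift g hg_child, fun n hn => ?_⟩
  rw [Function.comp_apply, ← hg_lab _ (hf_mem n hn)]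
  exact hf_lab n hn

section Steps

variable {σ : Type u} {ν : Type v}

theorem FuseStep.embedsIn [DecidableEq ν] {t t' : UTree σ ν} (h : FuseStep t t') :
    t.EmbedsIn t' := by
  obtain ⟨p, n₁, n₂, hn₁, -, hne, hp₁, hp₂, hlab, hnodes, hroot, hlab', hchild⟩ := h
  have hroot_ne : t.root ≠ n₂ := by
    intro h
    have := t'.root_mem
    rw [hnodes, hroot, h] at this
    exact Finset.notMem_erase _ _ this
  let g : ν → ν := fun x => if x = n₂ then n₁ else x
  have hg_ne : ∀ x, g x ≠ n₂ := fun x => by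
    by_cases hx : x = n₂ <;> simp [g, hx, hne]
  have hg_mem : ∀ x ∈ t.nodes, g x ∈ t'.nodes := fun x hx => by
    rw [hnodes, Finset.mem_erase]
    refine ⟨hg_ne x, ?_⟩
    by_cases hx₂ : x = n₂ <;> simp [g, hx₂, hn₁, hx]
  refine ⟨g, by simp [g, hroot, hroot_ne], hg_mem, fun a b hab => ?_, fun n hn => ?_⟩
  · rw [hchild]
    refine ⟨hg_ne a, hg_ne b, ?_⟩
    by_cases ha : a = n₂
    · subst ha
      have hb : b ≠ a := fun hb => t.acyclic a (.single (hb ▸ hab))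
      exact .inr ⟨by simp [g], by simpa [g, hb] using hab⟩
    · left
      by_cases hb : b = n₂
      · -- `n₂` is a child of both `a` and `p`, so `a = p`, and `g n₂ = n₁` is a child of `p`.
        have hap : a = p := t.eq_of_child_of_child (hb ▸ Ne.symm hroot_ne) hab (hb ▸ hp₂)
        subst hap
        simpa [g, ha, hb] using hp₁
      · simpa [g, ha, hb] using hab
  · rw [hlab' _ (hg_mem n hn)]
    by_cases hn₂ : n = n₂
    · simp [g, hn₂, hlab]
    · simp [g, hn₂]

theorem AddStep.embedsIn {t t' : UTree σ ν} (h : AddStep t t') : t.EmbedsIn t' := by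
  obtain ⟨-, -, -, -, -, hroot, hsub, hlab, -, hchild, -, -⟩ := h
  exact ⟨id, hroot.symm, fun _ hn => hsub hn,
    fun a b hab => (hchild a b (t.child_mem hab).1 (t.child_mem hab).2).mpr hab,
    fun n hn => (hlab n hn).symm⟩

theorem TreeLE.embedsIn [DecidableEq ν] {t t' : UTree σ ν} (h : TreeLE t t') :
    t.EmbedsIn t' := by
  induction h with
  | refl => exact .refl t
  | tail _ hstep ih => exact ih.trans (hstep.elim FuseStep.embedsIn AddStep.embedsIn)

end Steps

theorem statement16_general {σ : Type} {ν μ : Type} [DecidableEq ν]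
    (q : Twig σ μ) (t t' : UTree σ ν)
    (h1 : q.Sat t) (h2 : TreeLE t t') : q.Sat t' :=
  h1.of_embedsIn h2.embedsIn

/-- The fuse and add operations preserve embeddings of twig queries:
for every twig query `q` and trees `t` and `t'`, if there exists an embedding of `q`
in `t` and `t ⊴ t'`, then there exists an embedding of `q` in `t'`. -/
theorem statement16 {σ : Type} [Fintype σ] {ν μ : Type} [DecidableEq ν]
    (q : Twig σ μ) (t t' : UTree σ ν)
    (h1 : q.Sat t) (h2 : TreeLE t t') : q.Sat t' :=
  statement16_general q t t' h1 h2
end
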